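/- arXiv:1902.10638 — 2 statements merged into one kernel-verified Lean document; each statement's English description precedes it below -/
import Mathlib

section
/- Suppose j : V → M is a (κ,λ)-extender embedding (every element of M has the form j(f)(α) for some function f with domain κ in V and some ordinal α < λ) and 2^κ ≥ λ. Then the factor map k : N → M from the normal-measure ultrapower N derived from j is surjective, hence an isomorphism, and so j equals the ultrapower embedding by a normal measure on κ. -/
open Cardinal Ordinal

structure ExtenderFactor (κ lam : Cardinal) where
  Vt : Type 2
  Mt : Type 2
  Nt : Type 2
  j : Vt → Mt
  i : Vt → Nt
  k : Nt → Mt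
  k_inj : Function.Injective k
  factor : ∀ x, k (i x) = j x
  oM : Ordinal → Mt
  oN : Ordinal → Nt
  apM : Mt → Mt → Mt
  apN : Nt → Nt → Nt
  k_ap : ∀ a b, k (apN a b) = apM (k a) (k b)
  /-- the ordinal `(2^κ)^N` -/
  powN : Ordinal
  /-- `N` contains every subset of `κ`, so `(2^κ)^N ≥ 2^κ` as ordinals -/
  powN_ge : ((2 : Cardinal) ^ κ).ord ≤ powN
  /-- the factor-map lemma: `crit k > (2^κ)^N` -/
  k_fix : ∀ α ≤ powN, k (oN α) = oM α
  /-- `j` is a `(κ,λ)`-extender embedding: every element of `M` is `j(f)(α)`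
      for some function `f` with domain `κ` in `V` and some `α < λ` -/
  extender : ∀ x : Mt, ∃ f : Vt, ∃ α < lam.ord, x = apM (j f) (oM α)

namespace ExtenderFactor

variable {κ lam : Cardinal} (E : ExtenderFactor κ lam)

theorem le_powN_of_lt_ord (h2 : lam ≤ 2 ^ κ) {α : Ordinal} (hα : α < lam.ord) :
    α ≤ E.powN :=
  (hα.trans_le ((ord_le_ord.mpr h2).trans E.powN_ge)).le

theorem k_apN_i_oN (f : E.Vt) {α : Ordinal} (hα : α ≤ E.powN) :
    E.k (E.apN (E.i f) (E.oN α)) = E.apM (E.j f) (E.oM α) := by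
  rw [E.k_ap, E.factor, E.k_fix α hα]

theorem k_surjective (h2 : lam ≤ 2 ^ κ) : Function.Surjective E.k := by
  intro x
  obtain ⟨f, α, hα, rfl⟩ := E.extender x
  exact ⟨E.apN (E.i f) (E.oN α), E.k_apN_i_oN f (E.le_powN_of_lt_ord h2 hα)⟩

theorem k_bijective (h2 : lam ≤ 2 ^ κ) : Function.Bijective E.k :=
  ⟨E.k_inj, E.k_surjective h2⟩

end ExtenderFactor

theorem extender_embedding_with_large_continuum_is_ultrapower
    (κ lam : Cardinal) (h2 : lam ≤ 2 ^ κ) (E : ExtenderFactor κ lam) :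
    Function.Surjective E.k ∧ Function.Bijective E.k ∧
      ∃ e : E.Nt ≃ E.Mt, ∀ x, E.j x = e (E.i x) :=
  ⟨E.k_surjective h2, E.k_bijective h2,
    Equiv.ofBijective E.k (E.k_bijective h2), fun x => (E.factor x).symm⟩
end

section
/- If the poset Add(γ,δ) of partial functions p : δ×γ → 2 with |p| < γ is γ⁺-Knaster and any two uniform conditions of equal height with compatible working parts are compatible in A(γ,δ,X⃗), then the property of being γ⁺-Knaster transfers from Add(γ,δ) to A(γ,δ,X⃗) when all conditions are normalized to a common height. -/
open Cardinal Ordinal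

/-- `X` is a ladder system on `I`: for each `α ∈ I`, `X α` is a cofinal subset of `α`. -/
def IsLadderSystem (I : Set Ordinal) (X : Ordinal → Set Ordinal) : Prop :=
  ∀ α ∈ I, X α ⊆ Set.Iio α ∧ ∀ β < α, ∃ ξ ∈ X α, β < ξ

/-- A condition of the Cohen forcing `Add(γ,δ)`: a partial function `δ × γ → 2`
of size `< γ`. -/
structure AddCond (γ δ : Cardinal.{0}) where
  p : Set (Ordinal.{0} × Ordinal.{0} × Bool)
  functional : ∀ a r b b', (a, r, b) ∈ p → (a, r, b') ∈ p → b = b'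
  col_lt : ∀ a r b, (a, r, b) ∈ p → a < δ.ord
  row_lt : ∀ a r b, (a, r, b) ∈ p → r < γ.ord
  small : #↥p < Cardinal.lift.{1} γ

/-- Compatibility in `Add(γ,δ)`: a common extension exists. -/
def AddCond.Compatible {γ δ : Cardinal.{0}} (p q : AddCond γ δ) : Prop :=
  ∃ r : AddCond γ δ, p.p ⊆ r.p ∧ q.p ⊆ r.p

/-- A condition of the Apter–Shelah forcing `A(γ,δ,X⃗)`: a uniform Cohen condition
(filled up to a common height `ht < γ`) with side conditions `Z`, a set of chosen
ladders from `X` included in the support of the working part. -/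
structure ASCond (γ δ : Cardinal.{0}) (I : Set Ordinal) (X : Ordinal → Set Ordinal) where
  p : Set (Ordinal.{0} × Ordinal.{0} × Bool)
  functional : ∀ a r b b', (a, r, b) ∈ p → (a, r, b') ∈ p → b = b'
  col_lt : ∀ a r b, (a, r, b) ∈ p → a < δ.ord
  small : #↥p < Cardinal.lift.{1} γ
  ht : Ordinal
  ht_lt : ht < γ.ord
  row_lt : ∀ a r b, (a, r, b) ∈ p → r < ht
  uniform : ∀ a r b, (a, r, b) ∈ p → ∀ r' < ht, ∃ b', (a, r', b') ∈ p
  Z : Set Ordinal.{0}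
  Z_sub : Z ⊆ I
  ladder_sub : ∀ α ∈ Z, ∀ ξ ∈ X α, ∃ r b, (ξ, r, b) ∈ p

/-- The working part of an Apter–Shelah condition, as a Cohen condition. -/
def ASCond.toAdd {γ δ : Cardinal.{0}} {I : Set Ordinal} {X : Ordinal → Set Ordinal}
    (c : ASCond γ δ I X) : AddCond γ δ :=
  ⟨c.p, c.functional, c.col_lt, fun a r b h => (c.row_lt a r b h).trans c.ht_lt, c.small⟩

/-- The order of `A(γ,δ,X⃗)`. -/
def ASCond.le {γ δ : Cardinal.{0}} {I : Set Ordinal} {X : Ordinal → Set Ordinal}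
    (q p : ASCond γ δ I X) : Prop :=
  p.p ⊆ q.p ∧ p.Z ⊆ q.Z ∧
    ∀ α ∈ p.Z, ∀ r, p.ht ≤ r → r < q.ht → ∀ b : Bool,
      ∀ ξ ∈ X α, ∃ a ∈ X α, ξ < a ∧ (a, r, b) ∈ q.p

/-- Compatibility in `A(γ,δ,X⃗)`. -/
def ASCond.Compatible {γ δ : Cardinal.{0}} {I : Set Ordinal} {X : Ordinal → Set Ordinal}
    (p q : ASCond γ δ I X) : Prop :=
  ∃ r : ASCond γ δ I X, r.le p ∧ r.le q


/-!
By the infinite pigeonhole principle for the regular cardinal `γ⁺`, either `γ⁺` of the given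
conditions share one working part, and are then pairwise compatible outright, or their working
parts form a family of size `γ⁺` in `Add(γ,δ)`; a linked subfamily of size `γ⁺` of the latter
pulls back along a choice of preimages. As all the conditions have the same height,
compatibility of working parts lifts to compatibility in `A(γ,δ,X⃗)`.
-/

namespace Cardinal

universe u

variable {α β : Type u} {κ : Cardinal.{u}}

theorem exists_constant_subset_or_mk_image_eq (hκ : κ.IsRegular) (f : α → β) {A : Set α}
    (hA : #A = κ) : (∃ B ⊆ A, #B = κ ∧ ∃ b, ∀ x ∈ B, f x = b) ∨ #(f '' A) = κ := by
  refine (mk_image_le.trans_eq hA).lt_or_eq.imp_left fun himage => ?_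
  obtain ⟨b, B, hBA, hκB, hB⟩ :=
    infinite_pigeonhole_set (Set.imageFactorization f A) κ hA.ge hκ.aleph0_le
      (by rwa [hκ.cof_ord])
  exact ⟨B, hBA, (hA ▸ mk_le_mk_of_subset hBA).antisymm hκB, b.1,
    fun x hx => congrArg Subtype.val (hB hx)⟩

theorem exists_pairwise_subset_of_comap_knaster (hκ : κ.IsRegular) {R : α → α → Prop}
    {S : β → β → Prop} (hS : ∀ b, S b b)
    (hSκ : ∀ C : Set β, #C = κ → ∃ D ⊆ C, #D = κ ∧ ∀ p ∈ D, ∀ q ∈ D, S p q)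
    (f : α → β) {A : Set α} (hA : #A = κ) (hf : ∀ p ∈ A, ∀ q ∈ A, S (f p) (f q) → R p q) :
    ∃ B ⊆ A, #B = κ ∧ ∀ p ∈ B, ∀ q ∈ B, R p q := by
  rcases exists_constant_subset_or_mk_image_eq hκ f hA with ⟨B, hBA, hB, b, hfB⟩ | himage
  · refine ⟨B, hBA, hB, fun p hp q hq => hf p (hBA hp) q (hBA hq) ?_⟩
    rw [hfB p hp, hfB q hq]
    exact hS b
  · obtain ⟨D, hDA, hD, hSD⟩ := hSκ _ himage
    obtain ⟨B, hBA, hBD⟩ := Set.surjOn_iff_exists_bijOn_subset.mp hDA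
    refine ⟨B, hBA, ?_, fun p hp q hq => hf p (hBA hp) q (hBA hq) ?_⟩
    · rw [← mk_image_eq_of_injOn f B hBD.injOn, hBD.image_eq, hD]
    · exact hSD _ (hBD.mapsTo hp) _ (hBD.mapsTo hq)

end Cardinal

theorem knaster_transfers_to_apterShelah_general (γ δ : Cardinal) (hγ : γ.IsInaccessible)
    (I : Set Ordinal)
    (X : Ordinal → Set Ordinal)
    (hKnaster : ∀ A : Set (AddCond γ δ), #↥A = Cardinal.lift.{1} (Order.succ γ) →
      ∃ B ⊆ A, #↥B = Cardinal.lift.{1} (Order.succ γ) ∧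
        ∀ p ∈ B, ∀ q ∈ B, AddCond.Compatible p q)
    (htransfer : ∀ p q : ASCond γ δ I X, p.ht = q.ht →
      AddCond.Compatible p.toAdd q.toAdd → ASCond.Compatible p q)
    (A : Set (ASCond γ δ I X)) (hA : #↥A = Cardinal.lift.{1} (Order.succ γ))
    (hht : ∀ p ∈ A, ∀ q ∈ A, ASCond.ht p = ASCond.ht q) :
    ∃ B ⊆ A, #↥B = Cardinal.lift.{1} (Order.succ γ) ∧
      ∀ p ∈ B, ∀ q ∈ B, ASCond.Compatible p q := by
  have hκ : (Cardinal.lift.{1} (Order.succ γ)).IsRegular := by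
    rw [Cardinal.lift_succ]
    exact isRegular_succ (aleph0_le_lift.mpr hγ.aleph0_lt.le)
  exact exists_pairwise_subset_of_comap_knaster hκ (fun p => ⟨p, subset_rfl, subset_rfl⟩)
    hKnaster ASCond.toAdd hA fun p hp q hq => htransfer p q (hht p hp q hq)

theorem knaster_transfers_to_apterShelah (γ δ : Cardinal) (hγ : γ.IsInaccessible)
    (hδ : δ.IsRegular) (hlt : γ < δ)
    (I : Set Ordinal) (hI : I ⊆ Set.Iio δ.ord)
    (X : Ordinal → Set Ordinal) (hX : IsLadderSystem I X)
    (hKnaster : ∀ A : Set (AddCond γ δ), #↥A = Cardinal.lift.{1} (Order.succ γ) →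
      ∃ B ⊆ A, #↥B = Cardinal.lift.{1} (Order.succ γ) ∧
        ∀ p ∈ B, ∀ q ∈ B, AddCond.Compatible p q)
    (htransfer : ∀ p q : ASCond γ δ I X, p.ht = q.ht →
      AddCond.Compatible p.toAdd q.toAdd → ASCond.Compatible p q)
    (A : Set (ASCond γ δ I X)) (hA : #↥A = Cardinal.lift.{1} (Order.succ γ))
    (hht : ∀ p ∈ A, ∀ q ∈ A, ASCond.ht p = ASCond.ht q) :
    ∃ B ⊆ A, #↥B = Cardinal.lift.{1} (Order.succ γ) ∧
      ∀ p ∈ B, ∀ q ∈ B, ASCond.Compatible p q :=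
  knaster_transfers_to_apterShelah_general γ δ hγ I X hKnaster htransfer A hA hht
end
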